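/- For n ≥ 2, metric balls in the space of immersed rectifiable paths in ℝⁿ under the path Fréchet distance are path-connected: let δ > 0 and let α, β₁, β₂ : [0,1] → ℝⁿ be continuous, rectifiable, locally injective paths with d_FP(α,β₁) < δ and d_FP(α,β₂) < δ. Then there exists a family Γ : [0,1] → ([0,1] → ℝⁿ) such that each Γ_t is continuous, rectifiable, and locally injective, d_FP(Γ_0, β₁) = 0, d_FP(Γ_1, β₂) = 0, t ↦ Γ_t is continuous with respect to d_FP, and d_FP(α, Γ_t) < δ for all t ∈ [0,1]. -/

import Mathlib

open unitInterval

/-- The path Fréchet distance: infimum over orientation-preserving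
homeomorphisms of `[0,1]` (i.e. those fixing `0`) of the sup of distances. -/
noncomputable def dFP {E : Type*} [PseudoEMetricSpace E]
    (α β : unitInterval → E) : ENNReal :=
  ⨅ r : {r : unitInterval ≃ₜ unitInterval // r 0 = 0},
    ⨆ t : unitInterval, edist (α t) (β (r.1 t))

/-- The graph Fréchet distance: infimum over all homeomorphisms `h : X ≃ₜ Y`
of the sup of distances; it is `∞` if `X` and `Y` are not homeomorphic. -/
noncomputable def dFG {X Y E : Type*} [TopologicalSpace X] [TopologicalSpace Y]
    [PseudoEMetricSpace E] (φ : X → E) (ψ : Y → E) : ENNReal :=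
  ⨅ h : X ≃ₜ Y, ⨆ x : X, edist (φ x) (ψ (h x))

/-- A path is rectifiable if it has bounded variation (finite length). -/
def Rectifiable {E : Type*} [PseudoEMetricSpace E] (γ : unitInterval → E) : Prop :=
  BoundedVariationOn γ Set.univ

/-- A map is locally injective (an immersion) if every point of the domain has
a neighborhood on which the map is injective. -/
def LocallyInjective {X Y : Type*} [TopologicalSpace X] (f : X → Y) : Prop :=
  ∀ x : X, ∃ U ∈ nhds x, Set.InjOn f U

/-- A map of the circle is rectifiable if `t ↦ φ(e^{2πit})` has bounded
variation on `[0,1]`. -/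
def CircleRectifiable {E : Type*} [PseudoEMetricSpace E] (φ : Circle → E) : Prop :=
  BoundedVariationOn (fun t : ℝ => φ (Circle.exp (2 * Real.pi * t))) (Set.Icc (0:ℝ) 1)

open Set Filter Topology
open scoped Real

/-!
Reparametrize `β₁`, `β₂` by near-optimal homeomorphisms to paths `A`, `B` that stay pointwise
within some `d < δ` of `α`. The straight-line homotopy `(1 - t) A + t B` keeps that bound but need
not be immersed, so we add a circle of radius `κ t (1 - t)`, `κ = δ - d`, in a fixed 2-plane,
run at speed `2` with respect to the joint arc length `L = ℓ_A + ℓ_B`. Measured in `L`, the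
straight-line part moves with speed at most `1`, so locally the circle dominates and every
intermediate path is an immersion; `L` is continuous and strictly increasing because `A` and `B`
are continuous and rectifiable and `A` is locally injective. The radius vanishes at `t = 0, 1`,
which makes the homotopy jointly continuous, hence uniformly continuous in `t`.
-/

theorem Monotone.abs_sub_add_abs_sub {α : Type*} [LinearOrder α] {u v : α → ℝ} (hu : Monotone u)
    (hv : Monotone v) (p q : α) : |u p - u q| + |v p - v q| = |u p + v p - (u q + v q)| := by
  rcases le_total p q with h | h
  · rw [abs_of_nonpos (sub_nonpos.2 (hu h)), abs_of_nonpos (sub_nonpos.2 (hv h)),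
      abs_of_nonpos (by linarith [hu h, hv h])]
    ring
  · rw [abs_of_nonneg (sub_nonneg.2 (hu h)), abs_of_nonneg (sub_nonneg.2 (hv h)),
      abs_of_nonneg (by linarith [hu h, hv h])]
    ring

theorem dist_convexComb_le {E : Type*} [SeminormedAddCommGroup E] [NormedSpace ℝ E] (t : I)
    (a b a' b' : E) :
    dist ((1 - (t : ℝ)) • a + (t : ℝ) • b) ((1 - (t : ℝ)) • a' + (t : ℝ) • b')
      ≤ (1 - t) * dist a a' + t * dist b b' := by
  refine (dist_add_add_le _ _ _ _).trans_eq ?_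
  rw [dist_smul₀, dist_smul₀, Real.norm_of_nonneg (unitInterval.one_minus_nonneg t),
    Real.norm_of_nonneg (unitInterval.nonneg t)]

theorem LocallyInjective.comp {X Y Z : Type*} [TopologicalSpace X] [TopologicalSpace Y]
    {f : Y → Z} {g : X → Y} (hf : LocallyInjective f) (hg : Continuous g)
    (hg' : Function.Injective g) : LocallyInjective (f ∘ g) := fun x => by
  obtain ⟨U, hU, hUinj⟩ := hf (g x)
  exact ⟨g ⁻¹' U, hg.continuousAt.preimage_mem_nhds hU,
    fun p hp q hq hpq => hg' (hUinj hp hq hpq)⟩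

section BoundedVariation

variable {α : Type*} [LinearOrder α] {E : Type*}

theorem eVariationOn_add_le [SeminormedAddCommGroup E] (f g : α → E) (s : Set α) :
    eVariationOn (f + g) s ≤ eVariationOn f s + eVariationOn g s := by
  refine iSup_le fun ⟨n, u, hu, us⟩ => ?_
  calc ∑ i ∈ Finset.range n, edist ((f + g) (u (i + 1))) ((f + g) (u i))
      ≤ ∑ i ∈ Finset.range n,
          (edist (f (u (i + 1))) (f (u i)) + edist (g (u (i + 1))) (g (u i))) :=
        Finset.sum_le_sum fun i _ => edist_add_add_le _ _ _ _
    _ ≤ eVariationOn f s + eVariationOn g s := by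
        rw [Finset.sum_add_distrib]
        exact add_le_add (eVariationOn.sum_le hu us) (eVariationOn.sum_le hu us)

theorem BoundedVariationOn.add [SeminormedAddCommGroup E] {f g : α → E} {s : Set α}
    (hf : BoundedVariationOn f s) (hg : BoundedVariationOn g s) : BoundedVariationOn (f + g) s :=
  ne_top_of_le_ne_top (ENNReal.add_ne_top.2 ⟨hf, hg⟩) (eVariationOn_add_le f g s)

namespace variationOnFromTo

theorem monotone [PseudoEMetricSpace E] {f : α → E} (hf : LocallyBoundedVariationOn f univ)
    (a : α) : Monotone (variationOnFromTo f univ a) :=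
  monotoneOn_univ.1 (variationOnFromTo.monotoneOn hf (mem_univ a))

theorem dist_le_abs_sub [PseudoMetricSpace E] {f : α → E}
    (hf : LocallyBoundedVariationOn f univ) (a x y : α) :
    dist (f x) (f y) ≤ |variationOnFromTo f univ a y - variationOnFromTo f univ a x| := by
  wlog hxy : x ≤ y generalizing x y
  · rw [dist_comm, abs_sub_comm]
    exact this y x (le_of_not_ge hxy)
  rw [variationOnFromTo.sub_right hf (mem_univ a) (mem_univ y) (mem_univ x),
    variationOnFromTo.eq_of_le f univ hxy, abs_of_nonneg ENNReal.toReal_nonneg, dist_edist]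
  exact ENNReal.toReal_mono (hf x y (mem_univ x) (mem_univ y))
    (eVariationOn.edist_le f ⟨mem_univ x, le_rfl, hxy⟩ ⟨mem_univ y, hxy, le_rfl⟩)

theorem continuous [TopologicalSpace α] [OrderTopology α] [PseudoMetricSpace E] {f : α → E}
    (hf : LocallyBoundedVariationOn f univ) (hc : Continuous f) (a : α) :
    Continuous (variationOnFromTo f univ a) := by
  refine continuous_iff_continuousAt.2 fun b =>
    continuousAt_iff_continuous_left_right.2 ⟨?_, ?_⟩
  · rw [← continuousWithinAt_Iio_iff_Iic]
    simpa [ContinuousWithinAt] using tendsto_left (mem_univ a) (mem_univ b) hf (l := f b)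
      (by simpa using hc.continuousAt.tendsto.mono_left nhdsWithin_le_nhds)
  · rw [← continuousWithinAt_Ioi_iff_Ici]
    simpa [ContinuousWithinAt] using tendsto_right (mem_univ a) (mem_univ b) hf (l := f b)
      (by simpa using hc.continuousAt.tendsto.mono_left nhdsWithin_le_nhds)

theorem strictMono [TopologicalSpace α] [OrderTopology α] [DenselyOrdered α] [EMetricSpace E]
    {f : α → E} (hf : LocallyBoundedVariationOn f univ) (hinj : LocallyInjective f) (a : α) :
    StrictMono (variationOnFromTo f univ a) := by
  intro x y hxy
  refine (variationOnFromTo.monotone hf a hxy.le).lt_of_ne fun heq => ?_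
  have hconst := (variationOnFromTo.eq_zero_iff_of_le hf (mem_univ x) (mem_univ y) hxy.le).1
    ((variationOnFromTo.eq_left_iff hf (mem_univ a) (mem_univ x) (mem_univ y)).1 heq)
  obtain ⟨U, hU, hUinj⟩ := hinj x
  have : (𝓝[>] x).NeBot := nhdsGT_neBot_of_exists_gt ⟨y, hxy⟩
  obtain ⟨z, hzU, hxz, hzy⟩ : (U ∩ Ioo x y).Nonempty :=
    nonempty_of_mem (inter_mem (mem_nhdsWithin_of_mem_nhds hU) (Ioo_mem_nhdsGT hxy) :
      U ∩ Ioo x y ∈ 𝓝[>] x)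
  refine hxz.ne (hUinj (mem_of_mem_nhds hU) hzU (edist_eq_zero.1 ?_))
  exact hconst ⟨mem_univ x, le_rfl, hxy.le⟩ ⟨mem_univ z, hxz.le, hzy.le⟩

end variationOnFromTo

end BoundedVariation

section FrechetDistance

variable {E : Type*}

theorem unitInterval.strictMono_of_map_zero (r : I ≃ₜ I) (hr : r 0 = 0) : StrictMono r :=
  r.continuous.strictMono_of_inj_boundedOrder (by simp [show (⊥ : I) = 0 from rfl, hr])
    r.injective

theorem Rectifiable.comp_homeomorph [PseudoEMetricSpace E] {β : I → E} (hβ : Rectifiable β)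
    (r : I ≃ₜ I) (hr : r 0 = 0) : Rectifiable (β ∘ r) := by
  rw [Rectifiable, BoundedVariationOn, eVariationOn.comp_eq_of_monotoneOn β r
      ((unitInterval.strictMono_of_map_zero r hr).monotone.monotoneOn _),
    image_univ, r.surjective.range_eq]
  exact hβ

theorem dFP_le_iSup_edist [PseudoEMetricSpace E] (φ ψ : I → E) :
    dFP φ ψ ≤ ⨆ t, edist (φ t) (ψ t) :=
  iInf_le_of_le ⟨Homeomorph.refl I, rfl⟩ le_rfl

theorem dFP_comp_self [PseudoEMetricSpace E] (β : I → E) (r : I ≃ₜ I) (hr : r 0 = 0) :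
    dFP (β ∘ r) β = 0 :=
  nonpos_iff_eq_zero.1 <| iInf_le_of_le ⟨r, hr⟩ (by simp)

theorem dFP_lt_of_dist_le [PseudoMetricSpace E] {φ ψ : I → E} {d δ : ℝ}
    (h : ∀ t, dist (φ t) (ψ t) ≤ d) (hd : d < δ) : dFP φ ψ < ENNReal.ofReal δ := by
  refine (dFP_le_iSup_edist φ ψ).trans_lt ((iSup_le fun t => ?_).trans_lt
    ((ENNReal.ofReal_lt_ofReal_iff ((dist_nonneg.trans (h 0)).trans_lt hd)).2 hd))
  rw [edist_dist]
  exact ENNReal.ofReal_le_ofReal (h t)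

theorem exists_dist_le_of_dFP_lt [PseudoMetricSpace E] {α β : I → E} {δ : ℝ}
    (h : dFP α β < ENNReal.ofReal δ) :
    ∃ r : I ≃ₜ I, r 0 = 0 ∧ ∃ d < δ, ∀ t, dist (α t) (β (r t)) ≤ d := by
  obtain ⟨⟨r, hr⟩, hlt⟩ := iInf_lt_iff.1 h
  obtain ⟨d, hd, hsup, hdδ⟩ := ENNReal.lt_iff_exists_real_btwn.1 hlt
  refine ⟨r, hr, d, (ENNReal.ofReal_lt_ofReal_iff_of_nonneg hd).1 hdδ, fun t => ?_⟩
  exact (edist_lt_ofReal.1 ((le_iSup (fun t => edist (α t) (β (r t))) t).trans_lt hsup)).le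

theorem exists_dFP_lt_of_continuous_uncurry [PseudoMetricSpace E] {Γ : I → I → E}
    (hΓ : Continuous (Function.uncurry Γ)) (t : I) {ε : ℝ} (hε : 0 < ε) :
    ∃ δ : ℝ, 0 < δ ∧ ∀ s : I, |(s : ℝ) - t| < δ → dFP (Γ s) (Γ t) < ENNReal.ofReal ε := by
  let G : C(I, C(I, E)) := ContinuousMap.curry ⟨_, hΓ⟩
  obtain ⟨δ, hδ, hG⟩ := Metric.continuous_iff.1 G.continuous t ε hε
  refine ⟨δ, hδ, fun s hs => dFP_lt_of_dist_le (fun u => ?_)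
    (hG s (by rwa [Subtype.dist_eq, Real.dist_eq]))⟩
  exact ContinuousMap.dist_apply_le_dist (f := G s) (g := G t) u

end FrechetDistance

theorem Complex.norm_exp_I_mul_ofReal_sub_exp_I_mul_ofReal (a b : ℝ) :
    ‖exp (Complex.I * a) - exp (Complex.I * b)‖ = |2 * Real.sin ((a - b) / 2)| := by
  have : exp (Complex.I * a) - exp (Complex.I * b)
      = exp (Complex.I * b) * (exp (Complex.I * ↑(a - b)) - 1) := by
    rw [mul_sub, ← exp_add, mul_one]; push_cast; ring_nf
  rw [this, norm_mul, norm_exp_I_mul_ofReal, one_mul, norm_exp_I_mul_ofReal_sub_one,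
    Real.norm_eq_abs]

theorem nonempty_complex_linearIsometry {E : Type*} [NormedAddCommGroup E] [InnerProductSpace ℝ E]
    [FiniteDimensional ℝ E] (hE : 2 ≤ Module.finrank ℝ E) : Nonempty (ℂ →ₗᵢ[ℝ] E) := by
  let w : Fin 2 → E := stdOrthonormalBasis ℝ E ∘ Fin.castLE hE
  have hw : Orthonormal ℝ w :=
    (stdOrthonormalBasis ℝ E).orthonormal.comp _ (Fin.castLE_injective hE)
  let b := Complex.orthonormalBasisOneI
  refine ⟨(b.toBasis.constr ℝ w).isometryOfOrthonormal (v := b.toBasis) ?_ ?_⟩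
  · rw [OrthonormalBasis.coe_toBasis]
    exact b.orthonormal
  · convert hw
    exact funext (b.toBasis.constr_basis ℝ w)

section twoSpeedCircle

variable {E : Type*} [SeminormedAddCommGroup E] [NormedSpace ℝ E] (ι : ℂ →ₗᵢ[ℝ] E)

/-- The circle of radius `|c|` in the plane `ι ℂ`, traversed at speed `2`; it is `0` when
`c = 0`. -/
noncomputable def twoSpeedCircle (c x : ℝ) : E :=
  c • ι (Complex.exp (Complex.I * ↑(2 * x / c)))

theorem norm_twoSpeedCircle (c x : ℝ) : ‖twoSpeedCircle ι c x‖ = |c| := by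
  rw [twoSpeedCircle, norm_smul, ι.norm_map, Complex.norm_exp_I_mul_ofReal, mul_one,
    Real.norm_eq_abs]

theorem dist_twoSpeedCircle (c x y : ℝ) :
    dist (twoSpeedCircle ι c x) (twoSpeedCircle ι c y) = |c| * |2 * Real.sin ((x - y) / c)| := by
  rw [dist_eq_norm, twoSpeedCircle, twoSpeedCircle, ← smul_sub, ← map_sub, norm_smul, ι.norm_map,
    Complex.norm_exp_I_mul_ofReal_sub_exp_I_mul_ofReal, Real.norm_eq_abs]
  congr 4
  ring

theorem lipschitzWith_twoSpeedCircle (c : ℝ) : LipschitzWith 2 (twoSpeedCircle ι c) := by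
  refine LipschitzWith.of_dist_le_mul fun x y => ?_
  rw [dist_twoSpeedCircle, Real.dist_eq]
  rcases eq_or_ne c 0 with rfl | hc
  · simp
  calc |c| * |2 * Real.sin ((x - y) / c)| ≤ |c| * (2 * |(x - y) / c|) := by
        rw [abs_mul, abs_two]
        gcongr |c| * (2 * ?_)
        exact Real.abs_sin_le_abs
    _ = 2 * |x - y| := by rw [abs_div]; field_simp

theorem mul_abs_le_dist_twoSpeedCircle {c x y : ℝ} (h : |x - y| ≤ π / 2 * |c|) :
    4 / π * |x - y| ≤ dist (twoSpeedCircle ι c x) (twoSpeedCircle ι c y) := by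
  rw [dist_twoSpeedCircle]
  rcases eq_or_ne c 0 with rfl | hc
  · simp_all
  calc 4 / π * |x - y| = |c| * (2 * (2 / π * |(x - y) / c|)) := by
        rw [abs_div]; field_simp; ring
    _ ≤ |c| * |2 * Real.sin ((x - y) / c)| := by
        rw [abs_mul, abs_two]
        gcongr
        refine Real.mul_abs_le_abs_sin ?_
        rwa [abs_div, div_le_iff₀ (abs_pos.2 hc)]

theorem continuous_uncurry_twoSpeedCircle : Continuous (Function.uncurry (twoSpeedCircle ι)) := by
  refine continuous_iff_continuousAt.2 fun ⟨c, x⟩ => ?_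
  rcases eq_or_ne c 0 with rfl | hc
  · have h0 : twoSpeedCircle ι 0 x = 0 := by simp [twoSpeedCircle]
    rw [ContinuousAt, Function.uncurry_apply_pair, h0]
    refine squeeze_zero_norm (fun p => (norm_twoSpeedCircle ι p.1 p.2).le) ?_
    simpa using ((continuous_fst (X := ℝ) (Y := ℝ)).abs).tendsto ((0 : ℝ), x)
  · unfold twoSpeedCircle Function.uncurry
    fun_prop (disch := assumption)

theorem locallyInjective_add_twoSpeedCircle {X : Type*} [TopologicalSpace X] {g : X → E}
    {L : X → ℝ} (hL : Continuous L) (hLi : Function.Injective L)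
    (hg : ∀ p q, dist (g p) (g q) ≤ |L p - L q|) {c : ℝ} (hc : c ≠ 0) :
    LocallyInjective fun x => g x + twoSpeedCircle ι c (L x) := by
  intro x
  refine ⟨L ⁻¹' Metric.ball (L x) (π / 4 * |c|),
    hL.continuousAt.preimage_mem_nhds (Metric.ball_mem_nhds _ (by positivity)), ?_⟩
  intro p hp q hq (heq : g p + _ = g q + _)
  have hclose : |L p - L q| ≤ π / 2 * |c| := by
    have := abs_sub_le (L p) (L x) (L q)
    rw [mem_preimage, Metric.mem_ball, Real.dist_eq] at hp hq
    rw [abs_sub_comm (L x)] at this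
    linarith
  have hcircle :
      dist (twoSpeedCircle ι c (L p)) (twoSpeedCircle ι c (L q)) = dist (g q) (g p) := by
    rw [← dist_add_left (g p), heq, dist_add_right]
  have key := (mul_abs_le_dist_twoSpeedCircle ι hclose).trans (hcircle.trans_le (hg q p))
  have hπ : 1 < 4 / π := by rw [one_lt_div Real.pi_pos]; exact Real.pi_lt_four
  refine hLi (sub_eq_zero.1 (abs_nonpos_iff.1 ?_))
  nlinarith [abs_nonneg (L p - L q), abs_sub_comm (L p) (L q)]

end twoSpeedCircle

section jointArcLength

variable {E : Type*} [NormedAddCommGroup E] {A B : I → E}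

noncomputable def jointArcLength (A B : I → E) (s : I) : ℝ :=
  variationOnFromTo A univ 0 s + variationOnFromTo B univ 0 s

theorem jointArcLength_zero : jointArcLength A B 0 = 0 := by
  simp [jointArcLength, variationOnFromTo.self]

theorem monotone_jointArcLength (hA : Rectifiable A) (hB : Rectifiable B) :
    Monotone (jointArcLength A B) :=
  (variationOnFromTo.monotone hA.locallyBoundedVariationOn 0).add
    (variationOnFromTo.monotone hB.locallyBoundedVariationOn 0)

theorem strictMono_jointArcLength (hA : Rectifiable A) (hB : Rectifiable B)
    (hAi : LocallyInjective A) : StrictMono (jointArcLength A B) :=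
  (variationOnFromTo.strictMono hA.locallyBoundedVariationOn hAi 0).add_monotone
    (variationOnFromTo.monotone hB.locallyBoundedVariationOn 0)

theorem continuous_jointArcLength (hA : Rectifiable A) (hB : Rectifiable B) (hAc : Continuous A)
    (hBc : Continuous B) : Continuous (jointArcLength A B) :=
  (variationOnFromTo.continuous hA.locallyBoundedVariationOn hAc 0).add
    (variationOnFromTo.continuous hB.locallyBoundedVariationOn hBc 0)

theorem boundedVariationOn_jointArcLength (hA : Rectifiable A) (hB : Rectifiable B) :
    BoundedVariationOn (jointArcLength A B) univ := by
  have hmono := monotone_jointArcLength hA hB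
  refine (hmono.monotoneOn univ).boundedVariationOn (C := jointArcLength A B 1) fun s _ => ?_
  rw [abs_of_nonneg (jointArcLength_zero (A := A) (B := B) ▸ hmono (nonneg' : 0 ≤ s))]
  exact hmono (le_one' : s ≤ 1)

theorem dist_add_dist_le_abs_sub_jointArcLength (hA : Rectifiable A) (hB : Rectifiable B)
    (p q : I) :
    dist (A p) (A q) + dist (B p) (B q) ≤ |jointArcLength A B p - jointArcLength A B q| := by
  have hvA := variationOnFromTo.dist_le_abs_sub hA.locallyBoundedVariationOn 0 p q
  have hvB := variationOnFromTo.dist_le_abs_sub hB.locallyBoundedVariationOn 0 p q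
  rw [abs_sub_comm] at hvA hvB
  rw [jointArcLength, jointArcLength, ← Monotone.abs_sub_add_abs_sub
    (variationOnFromTo.monotone hA.locallyBoundedVariationOn 0)
    (variationOnFromTo.monotone hB.locallyBoundedVariationOn 0)]
  exact add_le_add hvA hvB

end jointArcLength

section circleHomotopy

variable {E : Type*} [NormedAddCommGroup E] [NormedSpace ℝ E] (ι : ℂ →ₗᵢ[ℝ] E) {A B : I → E}
  {κ : ℝ}

noncomputable def circleHomotopy (A B : I → E) (κ : ℝ) (t s : I) : E :=
  (1 - (t : ℝ)) • A s + (t : ℝ) • B s +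
    twoSpeedCircle ι (κ * (t * (1 - t))) (jointArcLength A B s)

theorem circleHomotopy_zero : circleHomotopy ι A B κ 0 = A := by
  funext s
  simp [circleHomotopy, twoSpeedCircle]

theorem circleHomotopy_one : circleHomotopy ι A B κ 1 = B := by
  funext s
  simp [circleHomotopy, twoSpeedCircle]

theorem continuous_uncurry_circleHomotopy (hA : Rectifiable A) (hB : Rectifiable B)
    (hAc : Continuous A) (hBc : Continuous B) :
    Continuous (Function.uncurry (circleHomotopy ι A B κ)) := by
  have hL := continuous_jointArcLength hA hB hAc hBc
  have hC : Continuous fun p : I × I =>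
      twoSpeedCircle ι (κ * (p.1 * (1 - p.1))) (jointArcLength A B p.2) :=
    (continuous_uncurry_twoSpeedCircle ι).comp
      (f := fun p : I × I => ((κ * (p.1 * (1 - p.1)) : ℝ), jointArcLength A B p.2)) (by fun_prop)
  unfold circleHomotopy Function.uncurry
  fun_prop

theorem rectifiable_circleHomotopy (hA : Rectifiable A) (hB : Rectifiable B) (t : I) :
    Rectifiable (circleHomotopy ι A B κ t) :=
  (((lipschitzWith_smul (1 - (t : ℝ))).comp_boundedVariationOn hA).add
    ((lipschitzWith_smul (t : ℝ)).comp_boundedVariationOn hB)).add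
    ((lipschitzWith_twoSpeedCircle ι _).comp_boundedVariationOn
      (boundedVariationOn_jointArcLength hA hB))

theorem locallyInjective_circleHomotopy (hA : Rectifiable A) (hB : Rectifiable B)
    (hAc : Continuous A) (hBc : Continuous B) (hAi : LocallyInjective A)
    (hBi : LocallyInjective B) (hκ : κ ≠ 0) (t : I) :
    LocallyInjective (circleHomotopy ι A B κ t) := by
  rcases eq_or_ne t 0 with rfl | ht0
  · rwa [circleHomotopy_zero]
  rcases eq_or_ne t 1 with rfl | ht1
  · rwa [circleHomotopy_one]
  have hc : κ * (t * (1 - t)) ≠ 0 := mul_ne_zero hκ (mul_ne_zero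
    (unitInterval.coe_ne_zero.2 ht0) (sub_ne_zero.2 (unitInterval.coe_ne_one.2 ht1).symm))
  refine locallyInjective_add_twoSpeedCircle ι (continuous_jointArcLength hA hB hAc hBc)
    (strictMono_jointArcLength hA hB hAi).injective (fun p q => ?_) hc
  calc _ ≤ (1 - t) * dist (A p) (A q) + t * dist (B p) (B q) := dist_convexComb_le t _ _ _ _
    _ ≤ dist (A p) (A q) + dist (B p) (B q) :=
      add_le_add (mul_le_of_le_one_left dist_nonneg (unitInterval.one_minus_le_one t))
        (mul_le_of_le_one_left dist_nonneg (unitInterval.le_one t))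
    _ ≤ _ := dist_add_dist_le_abs_sub_jointArcLength hA hB p q

theorem dist_circleHomotopy_le {α : I → E} {d : ℝ} (hAd : ∀ s, dist (α s) (A s) ≤ d)
    (hBd : ∀ s, dist (α s) (B s) ≤ d) (t s : I) :
    dist (α s) (circleHomotopy ι A B κ t s) ≤ d + |κ| / 4 := by
  have ht := unitInterval.nonneg t
  have ht' := unitInterval.one_minus_nonneg t
  have hline : dist (α s) ((1 - (t : ℝ)) • A s + (t : ℝ) • B s) ≤ d := by
    have hα : α s = (1 - (t : ℝ)) • α s + (t : ℝ) • α s := by rw [← add_smul]; simp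
    rw [hα]
    refine (dist_convexComb_le t _ _ _ _).trans ?_
    nlinarith [hAd s, hBd s]
  have hcircle : ‖twoSpeedCircle ι (κ * (t * (1 - t))) (jointArcLength A B s)‖ ≤ |κ| / 4 := by
    rw [norm_twoSpeedCircle, abs_mul, abs_of_nonneg (mul_nonneg ht ht')]
    nlinarith [abs_nonneg κ, sq_nonneg ((t : ℝ) - 1 / 2)]
  have htri := dist_triangle (α s) ((1 - (t : ℝ)) • A s + (t : ℝ) • B s)
    (circleHomotopy ι A B κ t s)
  rw [circleHomotopy, dist_self_add_right] at htri
  exact htri.trans (add_le_add hline hcircle)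

end circleHomotopy

theorem immersed_path_balls_path_connected_general (n : ℕ) (hn : 2 ≤ n)
    (δ : ℝ)
    (α β₁ β₂ : unitInterval → EuclideanSpace ℝ (Fin n))
    (hβ₁c : Continuous β₁) (hβ₁r : Rectifiable β₁) (hβ₁i : LocallyInjective β₁)
    (hβ₂c : Continuous β₂) (hβ₂r : Rectifiable β₂) (hβ₂i : LocallyInjective β₂)
    (hd₁ : dFP α β₁ < ENNReal.ofReal δ) (hd₂ : dFP α β₂ < ENNReal.ofReal δ) :
    ∃ Γ : unitInterval → unitInterval → EuclideanSpace ℝ (Fin n),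
      (∀ t, Continuous (Γ t) ∧ Rectifiable (Γ t) ∧ LocallyInjective (Γ t)) ∧
      dFP (Γ 0) β₁ = 0 ∧ dFP (Γ 1) β₂ = 0 ∧
      (∀ t : unitInterval, ∀ ε : ℝ, 0 < ε → ∃ δ' : ℝ, 0 < δ' ∧
        ∀ s : unitInterval, |(s : ℝ) - (t : ℝ)| < δ' →
          dFP (Γ s) (Γ t) < ENNReal.ofReal ε) ∧
      (∀ t : unitInterval, dFP α (Γ t) < ENNReal.ofReal δ) := by
  obtain ⟨ι⟩ := nonempty_complex_linearIsometry (E := EuclideanSpace ℝ (Fin n)) (by simpa using hn)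
  obtain ⟨r₁, hr₁, d₁, hd₁δ, hAd⟩ := exists_dist_le_of_dFP_lt hd₁
  obtain ⟨r₂, hr₂, d₂, hd₂δ, hBd⟩ := exists_dist_le_of_dFP_lt hd₂
  have hdδ : max d₁ d₂ < δ := max_lt hd₁δ hd₂δ
  have hAr := hβ₁r.comp_homeomorph r₁ hr₁
  have hBr := hβ₂r.comp_homeomorph r₂ hr₂
  have hAc := hβ₁c.comp r₁.continuous
  have hBc := hβ₂c.comp r₂.continuous
  have hΓc := continuous_uncurry_circleHomotopy ι (κ := δ - max d₁ d₂) hAr hBr hAc hBc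
  refine ⟨circleHomotopy ι (β₁ ∘ r₁) (β₂ ∘ r₂) (δ - max d₁ d₂), fun t => ⟨hΓc.uncurry_left t,
    rectifiable_circleHomotopy ι hAr hBr t, locallyInjective_circleHomotopy ι hAr hBr hAc hBc
      (hβ₁i.comp r₁.continuous r₁.injective) (hβ₂i.comp r₂.continuous r₂.injective)
      (by linarith) t⟩, ?_, ?_, fun t ε hε => exists_dFP_lt_of_continuous_uncurry hΓc t hε,
    fun t => dFP_lt_of_dist_le (dist_circleHomotopy_le ι
      (fun s => (hAd s).trans (le_max_left _ _)) (fun s => (hBd s).trans (le_max_right _ _)) t)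
      ?_⟩
  · rw [circleHomotopy_zero]
    exact dFP_comp_self β₁ r₁ hr₁
  · rw [circleHomotopy_one]
    exact dFP_comp_self β₂ r₂ hr₂
  · rw [abs_of_pos (sub_pos.2 hdδ)]
    linarith

/-- For n ≥ 2, metric balls in the space of immersed rectifiable paths in ℝⁿ
under the path Fréchet distance are path-connected. -/
theorem immersed_path_balls_path_connected (n : ℕ) (hn : 2 ≤ n)
    (δ : ℝ) (hδ : 0 < δ)
    (α β₁ β₂ : unitInterval → EuclideanSpace ℝ (Fin n))
    (hαc : Continuous α) (hαr : Rectifiable α) (hαi : LocallyInjective α)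
    (hβ₁c : Continuous β₁) (hβ₁r : Rectifiable β₁) (hβ₁i : LocallyInjective β₁)
    (hβ₂c : Continuous β₂) (hβ₂r : Rectifiable β₂) (hβ₂i : LocallyInjective β₂)
    (hd₁ : dFP α β₁ < ENNReal.ofReal δ) (hd₂ : dFP α β₂ < ENNReal.ofReal δ) :
    ∃ Γ : unitInterval → unitInterval → EuclideanSpace ℝ (Fin n),
      (∀ t, Continuous (Γ t) ∧ Rectifiable (Γ t) ∧ LocallyInjective (Γ t)) ∧
      dFP (Γ 0) β₁ = 0 ∧ dFP (Γ 1) β₂ = 0 ∧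
      (∀ t : unitInterval, ∀ ε : ℝ, 0 < ε → ∃ δ' : ℝ, 0 < δ' ∧
        ∀ s : unitInterval, |(s : ℝ) - (t : ℝ)| < δ' →
          dFP (Γ s) (Γ t) < ENNReal.ofReal ε) ∧
      (∀ t : unitInterval, dFP α (Γ t) < ENNReal.ofReal δ) :=
  immersed_path_balls_path_connected_general n hn δ α β₁ β₂ hβ₁c hβ₁r hβ₁i hβ₂c hβ₂r hβ₂i hd₁ hd₂
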